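/- Let n ≥ 2, let U be a nonempty finite type, let d : U → ℝ be a probability distribution (d(u) ≥ 0 for all u and Σ_u d(u) = 1), and let p_u be a positive probability vector on Fin n for each u ∈ U. Then there exists w from the permutations of Fin n to ℝ with w(σ) > 0 for every σ and Σ_σ w(σ) = 1, such that for all i ≠ j in Fin n: Σ_σ w(σ) · [σ⁻¹(i) < σ⁻¹(j)] = Σ_{u ∈ U} d(u) · p_u(i)/(p_u(i)+p_u(j)). -/

import Mathlib

/-!
The weights are a mixture, with weights `d u`, of Plackett–Luce distributions with parameters
`p u`: rank the items by drawing them one at a time without replacement, each with probability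
proportional to its parameter among the items left. Every ranking gets positive weight, and `i` is
drawn before `j` with probability `q i / (q i + q j)`. To see this, condition on the first item
drawn: if it is `i` or `j` the event is decided, and otherwise the rest of the ranking is a
Plackett–Luce ranking of the remaining items, so induction applies. Averaging `1`, `0` and
`q i / (q i + q j)` with weights `q i`, `q j` and the remaining mass gives `q i / (q i + q j)`.
-/

open Finset Equiv

/-- `σ k` is the item in position `k`. -/
noncomputable def plackettLuce {n : ℕ} (q : Fin n → ℝ) (σ : Perm (Fin n)) : ℝ :=
  ∏ k, q (σ k) / ∑ m ∈ Ici k, q (σ m)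

theorem sum_div_sum_mul_ite_eq {ι : Type*} [Fintype ι] [DecidableEq ι] {q : ι → ℝ} {i j : ι}
    (hij : i ≠ j) (hq : q i + q j ≠ 0) (hS : ∑ a, q a ≠ 0) :
    ∑ a, q a / (∑ m, q m) * (if a = i then 1 else if a = j then 0 else q i / (q i + q j)) =
      q i / (q i + q j) := by
  have weighted : ∑ a, q a * (if a = i then 1 else if a = j then 0 else q i / (q i + q j)) =
      q i / (q i + q j) * ∑ a, q a := by
    rw [mul_sum, ← sub_eq_zero, ← sum_sub_distrib, ← add_sum_erase _ _ (mem_univ i),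
      ← add_sum_erase _ _ (mem_erase.mpr ⟨hij.symm, mem_univ j⟩),
      sum_eq_zero fun a ha => ?_]
    · simp only [if_pos, if_neg hij.symm]
      field_simp
      ring
    · simp only [mem_erase, mem_univ, and_true] at ha
      simp only [if_neg ha.1, if_neg ha.2]
      ring
  calc _ = (∑ a, q a * (if a = i then 1 else if a = j then 0 else q i / (q i + q j))) /
        ∑ m, q m := by simp only [div_mul_eq_mul_div, sum_div]
    _ = q i / (q i + q j) := by rw [weighted, mul_div_cancel_right₀ _ hS]

namespace Equiv.Perm

variable {n : ℕ}

theorem decomposeFin_symm_inv_apply_self (a : Fin (n + 1)) (τ : Perm (Fin n)) :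
    (decomposeFin.symm (a, τ))⁻¹ a = 0 := by
  rw [inv_eq_iff_eq, decomposeFin_symm_apply_zero]

theorem decomposeFin_symm_inv_apply_self_lt {a x : Fin (n + 1)} (hx : x ≠ a) (τ : Perm (Fin n)) :
    (decomposeFin.symm (a, τ))⁻¹ a < (decomposeFin.symm (a, τ))⁻¹ x := by
  rw [decomposeFin_symm_inv_apply_self, Fin.pos_iff_ne_zero, Ne, inv_eq_iff_eq,
    decomposeFin_symm_apply_zero]
  exact hx

theorem decomposeFin_symm_inv_apply_swap_succ (a : Fin (n + 1)) (τ : Perm (Fin n)) (k : Fin n) :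
    (decomposeFin.symm (a, τ))⁻¹ (swap 0 a k.succ) = (τ⁻¹ k).succ := by
  rw [inv_eq_iff_eq, decomposeFin_symm_apply_succ, coe_inv, apply_symm_apply]

end Equiv.Perm

theorem Fin.exists_swap_zero_succ_eq {n : ℕ} {a x : Fin (n + 1)} (hx : x ≠ a) :
    ∃ k : Fin n, swap 0 a k.succ = x := by
  obtain ⟨k, hk⟩ := Fin.exists_succ_eq.mpr (by simpa [swap_apply_eq_iff] : swap 0 a x ≠ 0)
  exact ⟨k, by rw [hk, swap_apply_self]⟩

namespace plackettLuce

variable {n : ℕ}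

theorem pos {q : Fin n → ℝ} (hq : ∀ i, 0 < q i) (σ : Perm (Fin n)) : 0 < plackettLuce q σ :=
  prod_pos fun k _ => div_pos (hq _) (sum_pos (fun _ _ => hq _) ⟨k, mem_Ici.mpr le_rfl⟩)

theorem decomposeFin_symm (q : Fin (n + 1) → ℝ) (a : Fin (n + 1)) (τ : Perm (Fin n)) :
    plackettLuce q (Perm.decomposeFin.symm (a, τ)) =
      q a / (∑ m, q m) * plackettLuce (fun k => q (swap 0 a k.succ)) τ := by
  simp only [plackettLuce, Fin.prod_univ_succ, Fin.sum_Ici_succ,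
    Perm.decomposeFin_symm_apply_zero, Perm.decomposeFin_symm_apply_succ]
  rw [← bot_eq_zero, Ici_bot, Equiv.sum_comp]

theorem sum_mul_eq_sum_decomposeFin (q : Fin (n + 1) → ℝ) (F : Perm (Fin (n + 1)) → ℝ) :
    ∑ σ, plackettLuce q σ * F σ = ∑ a, q a / (∑ m, q m) *
      ∑ τ, plackettLuce (fun k => q (swap 0 a k.succ)) τ * F (Perm.decomposeFin.symm (a, τ)) := by
  rw [← Perm.decomposeFin.symm.sum_comp, Fintype.sum_prod_type]
  simp only [decomposeFin_symm, mul_sum, mul_assoc]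

theorem sum_eq_one {q : Fin n → ℝ} (hq : ∀ i, 0 < q i) : ∑ σ, plackettLuce q σ = 1 := by
  induction n with
  | zero => simp [plackettLuce]
  | succ n ih =>
    have hS : ∑ m, q m ≠ 0 := (sum_pos (fun m _ => hq m) univ_nonempty).ne'
    simpa [ih fun _ => hq _, ← sum_div, div_self hS] using sum_mul_eq_sum_decomposeFin q 1

theorem sum_mul_indicator_lt {q : Fin n → ℝ} (hq : ∀ i, 0 < q i) {i j : Fin n} (hij : i ≠ j) :
    ∑ σ, plackettLuce q σ * (if σ⁻¹ i < σ⁻¹ j then 1 else 0) = q i / (q i + q j) := by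
  induction n with
  | zero => exact i.elim0
  | succ n ih =>
    have given_first : ∀ a, ∑ τ, plackettLuce (fun k => q (swap 0 a k.succ)) τ *
        (if (Perm.decomposeFin.symm (a, τ))⁻¹ i < (Perm.decomposeFin.symm (a, τ))⁻¹ j
          then 1 else 0) =
        if a = i then 1 else if a = j then 0 else q i / (q i + q j) := by
      intro a
      by_cases hai : a = i
      · subst hai
        simp only [Perm.decomposeFin_symm_inv_apply_self_lt hij.symm, if_true, mul_one,
          sum_eq_one fun _ => hq _]
      by_cases haj : a = j
      · subst haj
        simp only [Perm.decomposeFin_symm_inv_apply_self, Fin.not_lt_zero, if_false, mul_zero,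
          sum_const_zero, hai, if_true]
      obtain ⟨i', rfl⟩ := Fin.exists_swap_zero_succ_eq (Ne.symm hai)
      obtain ⟨j', rfl⟩ := Fin.exists_swap_zero_succ_eq (Ne.symm haj)
      simp only [hai, haj, if_false, Perm.decomposeFin_symm_inv_apply_swap_succ,
        Fin.succ_lt_succ_iff]
      exact ih (fun _ => hq _) fun h => hij (by rw [h])
    rw [sum_mul_eq_sum_decomposeFin, sum_congr rfl fun a _ => by rw [given_first a]]
    exact sum_div_sum_mul_ite_eq hij (add_pos (hq i) (hq j)).ne'
      (sum_pos (fun m _ => hq m) univ_nonempty).ne'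

end plackettLuce

theorem expert_graph_subset_linear_ordering_polytope_general (n : ℕ)
    (U : Type) [Fintype U]
    (d : U → ℝ) (hd : ∀ u, 0 ≤ d u) (hdsum : ∑ u, d u = 1)
    (p : U → Fin n → ℝ) (hp : ∀ u i, 0 < p u i) :
    ∃ w : Equiv.Perm (Fin n) → ℝ,
      (∀ σ, 0 < w σ) ∧ (∑ σ, w σ = 1) ∧
      ∀ i j : Fin n, i ≠ j →
        ∑ σ, w σ * (if σ⁻¹ i < σ⁻¹ j then (1 : ℝ) else 0) =
          ∑ u, d u * (p u i / (p u i + p u j)) := by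
  obtain ⟨u₀, -, hu₀⟩ : ∃ u ∈ univ, (0 : ℝ) < d u := exists_lt_of_sum_lt (by simp [hdsum])
  refine ⟨fun σ => ∑ u, d u * plackettLuce (p u) σ, fun σ => ?_, ?_, fun i j hij => ?_⟩
  · exact sum_pos' (fun u _ => mul_nonneg (hd u) (plackettLuce.pos (hp u) σ).le)
      ⟨u₀, mem_univ _, mul_pos hu₀ (plackettLuce.pos (hp u₀) σ)⟩
  · rw [sum_comm]
    simp only [← mul_sum, plackettLuce.sum_eq_one (hp _), mul_one, hdsum]
  · simp only [Finset.sum_mul, mul_assoc]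
    rw [sum_comm]
    simp only [← mul_sum, plackettLuce.sum_mul_indicator_lt (hp _) hij]

/-- **Lemma 7 (`G ⊆ Co(R)`).** Every expert-graph edge-weight function — a mixture over a
nonempty finite set of states `u` (with weights `d u`) of pairwise opinions of positive
probability vectors `p u` — is realized by a strictly positive probability distribution `w`
on rankings of `Fin n` (`n ≥ 2`). -/
theorem expert_graph_subset_linear_ordering_polytope (n : ℕ) (hn : 2 ≤ n)
    (U : Type) [Fintype U] [Nonempty U]
    (d : U → ℝ) (hd : ∀ u, 0 ≤ d u) (hdsum : ∑ u, d u = 1)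
    (p : U → Fin n → ℝ) (hp : ∀ u i, 0 < p u i) (hpsum : ∀ u, ∑ i, p u i = 1) :
    ∃ w : Equiv.Perm (Fin n) → ℝ,
      (∀ σ, 0 < w σ) ∧ (∑ σ, w σ = 1) ∧
      ∀ i j : Fin n, i ≠ j →
        ∑ σ, w σ * (if σ⁻¹ i < σ⁻¹ j then (1 : ℝ) else 0) =
          ∑ u, d u * (p u i / (p u i + p u j)) :=
  expert_graph_subset_linear_ordering_polytope_general n U d hd hdsum p hp
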